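/- arXiv:2412.20575 — 6 statements merged into one kernel-verified Lean document; each statement's English description precedes it below -/
import Mathlib

section
/- Let u : [0,T] → ℝ^n be continuously differentiable and A a positive semidefinite symmetric n×n real matrix, with u'(t) + A u(t) = f(t) for all t ∈ [0,T]. Then for every t ∈ [0,T]: ⟨u(t), A u(t)⟩ + ∫_0^t (‖u'(s)‖² + ‖A u(s)‖²) ds = ⟨u(0), A u(0)⟩ + ∫_0^t ‖f(s)‖² ds. -/
/-! Expanding `‖u' + Au‖²` gives `‖u'‖² + ‖Au‖² + 2⟨u', Au⟩`, and for symmetric `A`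
the cross term `2⟨u', Au⟩` is the derivative of `⟨u, Au⟩`; integrating over `[0, t]`
gives the identity. -/

open Matrix MeasureTheory

section Derivatives

variable {𝕜 ι : Type*} [NontriviallyNormedField 𝕜] [Fintype ι] {t : 𝕜}

theorem HasDerivAt.dotProduct {v w : 𝕜 → ι → 𝕜} {v' w' : ι → 𝕜}
    (hv : HasDerivAt v v' t) (hw : HasDerivAt w w' t) :
    HasDerivAt (fun s => v s ⬝ᵥ w s) (v' ⬝ᵥ w t + v t ⬝ᵥ w') t := by
  simp only [_root_.dotProduct, ← Finset.sum_add_distrib]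
  exact .fun_sum fun i _ => (hasDerivAt_pi.1 hv i).mul (hasDerivAt_pi.1 hw i)

theorem HasDerivAt.matrix_mulVec (A : Matrix ι ι 𝕜) {v : 𝕜 → ι → 𝕜} {v' : ι → 𝕜}
    (hv : HasDerivAt v v' t) : HasDerivAt (fun s => A *ᵥ v s) (A *ᵥ v') t :=
  hasDerivAt_pi.2 fun i => by
    simpa [mulVec] using (hasDerivAt_const t (A i)).dotProduct hv

theorem HasDerivAt.dotProduct_mulVec_self {A : Matrix ι ι 𝕜} (hA : A.IsSymm)
    {v : 𝕜 → ι → 𝕜} {v' : ι → 𝕜} (hv : HasDerivAt v v' t) :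
    HasDerivAt (fun s => v s ⬝ᵥ A *ᵥ v s) (2 * (v' ⬝ᵥ A *ᵥ v t)) t := by
  convert hv.dotProduct (hv.matrix_mulVec A) using 1
  rw [← hA.eq, dotProduct_transpose_mulVec, hA.eq]
  ring

end Derivatives

theorem sum_add_sq {R ι : Type*} [CommSemiring R] [Fintype ι] (x y : ι → R) :
    ∑ i, (x i + y i) ^ 2 = ∑ i, x i ^ 2 + ∑ i, y i ^ 2 + 2 * (x ⬝ᵥ y) := by
  simp only [dotProduct, Finset.mul_sum, ← Finset.sum_add_distrib]
  exact Finset.sum_congr rfl fun i _ => by ring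

theorem integral_two_mul_dotProduct_mulVec_self {ι : Type*} [Fintype ι]
    {A : Matrix ι ι ℝ} (hA : A.IsSymm) {u u' : ℝ → ι → ℝ} {a b : ℝ}
    (hu : ∀ s ∈ Set.uIcc a b, HasDerivAt u (u' s) s)
    (hu' : ContinuousOn u' (Set.uIcc a b)) :
    ∫ s in a..b, 2 * (u' s ⬝ᵥ A *ᵥ u s) = u b ⬝ᵥ A *ᵥ u b - u a ⬝ᵥ A *ᵥ u a := by
  have hu_cont : ContinuousOn u (Set.uIcc a b) := fun s hs =>
    (hu s hs).continuousAt.continuousWithinAt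
  refine intervalIntegral.integral_eq_sub_of_hasDerivAt
    (fun s hs => (hu s hs).dotProduct_mulVec_self hA) (ContinuousOn.intervalIntegrable ?_)
  fun_prop

theorem continuous_maximal_regularity_general (n : ℕ) (T : ℝ)
    (A : Matrix (Fin n) (Fin n) ℝ) (hA : A.PosSemidef)
    (u u' f : ℝ → (Fin n → ℝ))
    (hderiv : ∀ t ∈ Set.Icc (0 : ℝ) T, HasDerivAt u (u' t) t)
    (hcont : ContinuousOn u' (Set.Icc (0 : ℝ) T))
    (heq : ∀ t ∈ Set.Icc (0 : ℝ) T, u' t + A.mulVec (u t) = f t)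
    (t : ℝ) (ht : t ∈ Set.Icc (0 : ℝ) T) :
    u t ⬝ᵥ A.mulVec (u t)
        + ∫ s in (0 : ℝ)..t, ((∑ i, (u' s i) ^ 2) + ∑ i, (A.mulVec (u s) i) ^ 2)
      = u 0 ⬝ᵥ A.mulVec (u 0) + ∫ s in (0 : ℝ)..t, ∑ i, (f s i) ^ 2 := by
  have hsub : Set.uIcc 0 t ⊆ Set.Icc 0 T := by
    rw [Set.uIcc_of_le ht.1]; exact Set.Icc_subset_Icc le_rfl ht.2
  have hu : ∀ s ∈ Set.uIcc 0 t, HasDerivAt u (u' s) s := fun s hs => hderiv s (hsub hs)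
  have hu' : ContinuousOn u' (Set.uIcc 0 t) := hcont.mono hsub
  have hu_cont : ContinuousOn u (Set.uIcc 0 t) := fun s hs =>
    (hu s hs).continuousAt.continuousWithinAt
  have hsplit : ∫ s in (0 : ℝ)..t, ∑ i, (f s i) ^ 2
      = (∫ s in (0 : ℝ)..t, ((∑ i, (u' s i) ^ 2) + ∑ i, (A.mulVec (u s) i) ^ 2))
        + ∫ s in (0 : ℝ)..t, 2 * (u' s ⬝ᵥ A *ᵥ u s) := by
    rw [← intervalIntegral.integral_add (by apply ContinuousOn.intervalIntegrable; fun_prop)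
      (by apply ContinuousOn.intervalIntegrable; fun_prop)]
    refine intervalIntegral.integral_congr fun s hs => ?_
    simp only [← heq s (hsub hs), Pi.add_apply, sum_add_sq]
  have hA_symm : A.IsSymm := isHermitian_iff_isSymm.1 hA.isHermitian
  rw [hsplit, integral_two_mul_dotProduct_mulVec_self hA_symm hu hu']
  ring

/-- Continuous maximal `L²` regularity identity in `ℝ^n`: if `u' + A u = f` on `[0,T]`
with `A` symmetric positive semidefinite, then for every `t ∈ [0,T]`,
`⟨u t, A u t⟩ + ∫₀ᵗ (‖u'‖² + ‖Au‖²) = ⟨u 0, A u 0⟩ + ∫₀ᵗ ‖f‖²`. -/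
theorem continuous_maximal_regularity (n : ℕ) (T : ℝ) (hT : 0 < T)
    (A : Matrix (Fin n) (Fin n) ℝ) (hA : A.PosSemidef)
    (u u' f : ℝ → (Fin n → ℝ))
    (hderiv : ∀ t ∈ Set.Icc (0 : ℝ) T, HasDerivAt u (u' t) t)
    (hcont : ContinuousOn u' (Set.Icc (0 : ℝ) T))
    (hf : ContinuousOn f (Set.Icc (0 : ℝ) T))
    (heq : ∀ t ∈ Set.Icc (0 : ℝ) T, u' t + A.mulVec (u t) = f t)
    (t : ℝ) (ht : t ∈ Set.Icc (0 : ℝ) T) :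
    u t ⬝ᵥ A.mulVec (u t)
        + ∫ s in (0 : ℝ)..t, ((∑ i, (u' s i) ^ 2) + ∑ i, (A.mulVec (u s) i) ^ 2)
      = u 0 ⬝ᵥ A.mulVec (u 0) + ∫ s in (0 : ℝ)..t, ∑ i, (f s i) ^ 2 :=
  continuous_maximal_regularity_general n T A hA u u' f hderiv hcont heq t ht
end

section
/- Let A be a symmetric positive semidefinite n×n real matrix and k > 0. If vectors U_0, ..., U_m in ℝ^n and data f_0, ..., f_m satisfy the trapezoidal rule (U_{n+1} - U_n)/k + A(U_{n+1} + U_n)/2 = (f_{n+1} + f_n)/2 for n = 0, ..., m-1, then ⟨U_m, A U_m⟩ + ∑_{n=0}^{m-1} k ‖(U_{n+1} - U_n)/k‖² + ∑_{n=0}^{m-1} k ‖A(U_{n+1} + U_n)/2‖² = ⟨U_0, A U_0⟩ + ∑_{n=0}^{m-1} k ‖(f_{n+1} + f_n)/2‖². -/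
/-!
Crank–Nicolson is an energy method: taking the squared norm of both sides of the scheme, with
`D = (U_{j+1} - U_j)/k` and `B = A(U_{j+1} + U_j)/2`, the cross term `2k⟨D, B⟩` equals
`⟨U_{j+1}, A U_{j+1}⟩ - ⟨U_j, A U_j⟩` by symmetry of `A`, so summing over `j` telescopes.
-/

open Matrix Finset

namespace Matrix

variable {ι R : Type*} [Fintype ι]

theorem IsSymm.dotProduct_mulVec_comm [CommSemiring R] {A : Matrix ι ι R} (hA : A.IsSymm)
    (x y : ι → R) : y ⬝ᵥ A *ᵥ x = x ⬝ᵥ A *ᵥ y := by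
  rw [dotProduct_mulVec, ← mulVec_transpose, hA, dotProduct_comm]

theorem IsSymm.sub_dotProduct_mulVec_add [CommRing R] {A : Matrix ι ι R} (hA : A.IsSymm)
    (x y : ι → R) : (x - y) ⬝ᵥ A *ᵥ (x + y) = x ⬝ᵥ A *ᵥ x - y ⬝ᵥ A *ᵥ y := by
  rw [sub_dotProduct, mulVec_add, dotProduct_add, dotProduct_add, hA.dotProduct_mulVec_comm x y]
  ring

theorem sum_add_sq [CommSemiring R] (v w : ι → R) :
    ∑ i, (v + w) i ^ 2 = ∑ i, v i ^ 2 + ∑ i, w i ^ 2 + 2 * (v ⬝ᵥ w) := by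
  simp only [Pi.add_apply, add_sq, sum_add_distrib, dotProduct, mul_sum, mul_assoc]
  ring

theorem IsSymm.trapezoidal_energy_step {A : Matrix ι ι ℝ} (hA : A.IsSymm) {k : ℝ} (hk : k ≠ 0)
    (x y : ι → ℝ) :
    k * ∑ i, (k⁻¹ • (x - y) + (2⁻¹ : ℝ) • A *ᵥ (x + y)) i ^ 2
      = k * ∑ i, (k⁻¹ • (x - y)) i ^ 2 + k * ∑ i, ((2⁻¹ : ℝ) • A *ᵥ (x + y)) i ^ 2
        + (x ⬝ᵥ A *ᵥ x - y ⬝ᵥ A *ᵥ y) := by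
  have hcross : 2 * k * (k⁻¹ • (x - y) ⬝ᵥ (2⁻¹ : ℝ) • A *ᵥ (x + y))
      = x ⬝ᵥ A *ᵥ x - y ⬝ᵥ A *ᵥ y := by
    rw [smul_dotProduct, dotProduct_smul, hA.sub_dotProduct_mulVec_add, smul_eq_mul, smul_eq_mul]
    field_simp
  rw [sum_add_sq, ← hcross]
  ring

end Matrix

/-- Discrete maximal `L²` regularity identity for the trapezoidal (Crank–Nicolson) method
with constant step `k` in `ℝ^n`, for a symmetric positive semidefinite matrix `A`. -/
theorem trapezoidal_maximal_regularity (n m : ℕ)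
    (A : Matrix (Fin n) (Fin n) ℝ) (hA : A.PosSemidef)
    (k : ℝ) (hk : 0 < k) (U f : ℕ → (Fin n → ℝ))
    (heq : ∀ j < m,
      k⁻¹ • (U (j + 1) - U j) + (2⁻¹ : ℝ) • A.mulVec (U (j + 1) + U j)
        = (2⁻¹ : ℝ) • (f (j + 1) + f j)) :
    U m ⬝ᵥ A.mulVec (U m)
        + ∑ j ∈ Finset.range m, k * ∑ i, (k⁻¹ • (U (j + 1) - U j)) i ^ 2
        + ∑ j ∈ Finset.range m, k * ∑ i, ((2⁻¹ : ℝ) • A.mulVec (U (j + 1) + U j)) i ^ 2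
      = U 0 ⬝ᵥ A.mulVec (U 0)
        + ∑ j ∈ Finset.range m, k * ∑ i, ((2⁻¹ : ℝ) • (f (j + 1) + f j)) i ^ 2 := by
  have hstep : ∀ j ∈ range m, k * ∑ i, ((2⁻¹ : ℝ) • (f (j + 1) + f j)) i ^ 2
      = k * ∑ i, (k⁻¹ • (U (j + 1) - U j)) i ^ 2
        + k * ∑ i, ((2⁻¹ : ℝ) • A *ᵥ (U (j + 1) + U j)) i ^ 2
        + (U (j + 1) ⬝ᵥ A *ᵥ U (j + 1) - U j ⬝ᵥ A *ᵥ U j) := fun j hj => by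
    rw [← heq j (mem_range.1 hj)]
    exact (isHermitian_iff_isSymm.1 hA.1).trapezoidal_energy_step hk.ne' _ _
  rw [sum_congr rfl hstep, sum_add_distrib, sum_add_distrib,
    sum_range_sub (fun j => U j ⬝ᵥ A *ᵥ U j)]
  ring
end

section
/- (Backward Euler maximal regularity) Let A be a symmetric positive semidefinite n×n matrix, and suppose U_0, ..., U_m ∈ ℝ^n satisfy (U_{n+1} - U_n)/k_n + A U_{n+1} = g_n for time steps k_n > 0. Then ⟨U_m, A U_m⟩ + ∑_{n=0}^{m-1} k_n ‖(U_{n+1}-U_n)/k_n‖² + ∑_{n=0}^{m-1} k_n ‖A U_{n+1}‖² ≤ ⟨U_0, A U_0⟩ + ∑_{n=0}^{m-1} k_n ‖g_n‖². -/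
open Matrix

/-!
Squaring the scheme `w + T a = g`, with `w = k⁻¹ • (a - b)` the difference quotient, gives
`k ‖g‖² = k ‖w‖² + k ‖T a‖² + 2 ⟪T a, a - b⟫`. For a positive `T` the cross term dominates the
increment of the energy `⟪T u, u⟫`, because their difference is `⟪T (a - b), a - b⟫ ≥ 0`; summing
the resulting one-step estimates telescopes the energies. The matrix statement is the case
`E = EuclideanSpace ℝ (Fin n)`, `T = A.toEuclideanLin`.
-/

open Finset in
theorem add_sum_le_add_sum_of_forall_lt {e c d : ℕ → ℝ} {m : ℕ}
    (h : ∀ j < m, e (j + 1) + c j ≤ e j + d j) :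
    e m + ∑ j ∈ range m, c j ≤ e 0 + ∑ j ∈ range m, d j := by
  have htel : ∑ j ∈ range m, (e (j + 1) - e j) ≤ ∑ j ∈ range m, (d j - c j) :=
    sum_le_sum fun j hj ↦ by linarith [h j (mem_range.mp hj)]
  rw [sum_range_sub, sum_sub_distrib] at htel
  linarith

section InnerProductSpace

open scoped InnerProductSpace

variable {E : Type*} [NormedAddCommGroup E] [InnerProductSpace ℝ E] {T : E →ₗ[ℝ] E}

theorem LinearMap.IsPositive.inner_map_self_sub_inner_map_self_le (hT : T.IsPositive)
    (a b : E) : ⟪T a, a⟫_ℝ - ⟪T b, b⟫_ℝ ≤ 2 * ⟪T a, a - b⟫_ℝ := by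
  have hsymm : ⟪T b, a⟫_ℝ = ⟪T a, b⟫_ℝ := by
    rw [hT.isSymmetric b a, real_inner_comm]
  have hnonneg := hT.inner_nonneg_left (a - b)
  simp only [map_sub, inner_sub_left, inner_sub_right] at hnonneg ⊢
  linarith

theorem backwardEuler_step_energy_le (hT : T.IsPositive) {k : ℝ} (hk : 0 < k) {a b g : E}
    (heq : k⁻¹ • (a - b) + T a = g) :
    ⟪T a, a⟫_ℝ + k * ‖k⁻¹ • (a - b)‖ ^ 2 + k * ‖T a‖ ^ 2 ≤ ⟪T b, b⟫_ℝ + k * ‖g‖ ^ 2 := by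
  have hcross : k * ⟪k⁻¹ • (a - b), T a⟫_ℝ = ⟪T a, a - b⟫_ℝ := by
    rw [real_inner_smul_left, ← mul_assoc, mul_inv_cancel₀ hk.ne', one_mul, real_inner_comm]
  have hexpand := norm_add_sq_real (k⁻¹ • (a - b)) (T a)
  rw [heq] at hexpand
  nlinarith [hT.inner_map_self_sub_inner_map_self_le a b]

open Finset in
theorem backwardEuler_energy_le (hT : T.IsPositive) {m : ℕ} {k : ℕ → ℝ}
    (hk : ∀ j < m, 0 < k j) {u g : ℕ → E}
    (heq : ∀ j < m, (k j)⁻¹ • (u (j + 1) - u j) + T (u (j + 1)) = g j) :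
    ⟪T (u m), u m⟫_ℝ + ∑ j ∈ range m, k j * ‖(k j)⁻¹ • (u (j + 1) - u j)‖ ^ 2
        + ∑ j ∈ range m, k j * ‖T (u (j + 1))‖ ^ 2
      ≤ ⟪T (u 0), u 0⟫_ℝ + ∑ j ∈ range m, k j * ‖g j‖ ^ 2 := by
  rw [add_assoc, ← sum_add_distrib]
  refine add_sum_le_add_sum_of_forall_lt (e := fun j ↦ ⟪T (u j), u j⟫_ℝ) fun j hj ↦ ?_
  rw [← add_assoc]
  exact backwardEuler_step_energy_le hT (hk j hj) (heq j hj)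

end InnerProductSpace

/-- Backward (implicit) Euler maximal regularity estimate in `ℝ^n` with variable time steps
and a symmetric positive semidefinite matrix `A`. -/
theorem backwardEuler_maximal_regularity (n m : ℕ)
    (A : Matrix (Fin n) (Fin n) ℝ) (hA : A.PosSemidef)
    (k : ℕ → ℝ) (hk : ∀ j < m, 0 < k j) (U g : ℕ → (Fin n → ℝ))
    (heq : ∀ j < m, (k j)⁻¹ • (U (j + 1) - U j) + A.mulVec (U (j + 1)) = g j) :
    U m ⬝ᵥ A.mulVec (U m)
        + ∑ j ∈ Finset.range m, k j * ∑ i, ((k j)⁻¹ • (U (j + 1) - U j)) i ^ 2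
        + ∑ j ∈ Finset.range m, k j * ∑ i, (A.mulVec (U (j + 1)) i) ^ 2
      ≤ U 0 ⬝ᵥ A.mulVec (U 0)
        + ∑ j ∈ Finset.range m, k j * ∑ i, (g j i) ^ 2 := by
  have hstep : ∀ j < m, (k j)⁻¹ • (WithLp.toLp 2 (U (j + 1)) - WithLp.toLp 2 (U j))
      + A.toEuclideanLin (WithLp.toLp 2 (U (j + 1))) = WithLp.toLp 2 (g j) := fun j hj ↦ by
    rw [← heq j hj, WithLp.toLp_add, WithLp.toLp_smul, WithLp.toLp_sub, toLpLin_toLp,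
      toLin'_apply]
  have henergy := backwardEuler_energy_le (u := fun j ↦ WithLp.toLp 2 (U j))
    (g := fun j ↦ WithLp.toLp 2 (g j)) (isPositive_toEuclideanLin_iff.mpr hA) hk hstep
  simp only [← WithLp.toLp_sub, ← WithLp.toLp_smul, toLpLin_toLp, toLin'_apply,
    EuclideanSpace.inner_toLp_toLp, star_trivial, EuclideanSpace.real_norm_sq_eq] at henergy
  simpa only [dotProduct_comm (A *ᵥ _)] using henergy
end

section
/- Let A be a symmetric positive semidefinite n×n matrix, let (a_{ij}), (b_i) be the coefficients of an algebraically stable q-stage Runge–Kutta method, and let k > 0. Suppose U_{n}, U_{n+1}, and stage values U_{n,1}, ..., U_{n,q} ∈ ℝ^n satisfy U_{ni} = U_n − k ∑_j a_{ij}(A U_{nj} − f_{nj}) and U_{n+1} = U_n − k ∑_i b_i (A U_{ni} − f_{ni}) for given f_{ni} ∈ ℝ^n. Then ⟨U_{n+1}, A U_{n+1}⟩ + k ∑_i b_i ‖A U_{ni} − f_{ni}‖² + k ∑_i b_i ‖A U_{ni}‖² ≤ ⟨U_n, A U_n⟩ + k ∑_i b_i ‖f_{ni}‖². -/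
/-!
Put `g i = A U_{ni} - f_{ni}` and `β u v = u ⬝ᵥ A v`. Expanding `β U_{n+1} U_{n+1}` and
eliminating `β U_n (g i)` through the stage equations gives, for any symmetric bilinear form,
the exact identity
`β U_{n+1} U_{n+1} = β U_n U_n - 2k ∑ b_i β U_{ni} (g i) - k² ∑ m_ij β (g i) (g j)`.
The last sum pairs `M` entrywise with the Gram matrix of the `g i` for `A`; both are positive
semidefinite, so by the Schur product theorem it is nonnegative. Polarization,
`2 ⟨A U, A U - f⟩ = ‖A U - f‖² + ‖A U‖² - ‖f‖²`, turns the middle sum into the dissipation terms.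
-/

open Matrix

open scoped ComplexOrder in
theorem Matrix.PosSemidef.sum_mul_nonneg {ι 𝕜 : Type*} [Fintype ι] [RCLike 𝕜]
    {M N : Matrix ι ι 𝕜} (hM : M.PosSemidef) (hN : N.PosSemidef) :
    0 ≤ ∑ i, ∑ j, M i j * N i j := by
  simpa [dotProduct, mulVec] using (hM.hadamard hN).dotProduct_mulVec_nonneg (fun _ => 1)

theorem Matrix.PosSemidef.gram_dotProduct_mulVec {ι m : Type*} [Fintype ι] [Fintype m]
    {A : Matrix m m ℝ} (hA : A.PosSemidef) (v : ι → m → ℝ) :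
    (of fun i j => v i ⬝ᵥ A *ᵥ v j).PosSemidef := by
  convert hA.mul_mul_conjTranspose_same (of v) using 1
  ext i j
  simp only [of_apply, mul_apply, dotProduct, mulVec, Finset.mul_sum, Finset.sum_mul,
    conjTranspose_apply, star_trivial, mul_assoc]
  exact Finset.sum_comm

theorem Matrix.two_mul_sub_dotProduct {m R : Type*} [Fintype m] [CommRing R] (x y : m → R) :
    2 * ((x - y) ⬝ᵥ x) = ∑ j, (x - y) j ^ 2 + ∑ j, x j ^ 2 - ∑ j, y j ^ 2 := by
  simp only [dotProduct, Finset.mul_sum, ← Finset.sum_add_distrib, ← Finset.sum_sub_distrib]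
  exact Finset.sum_congr rfl fun j _ => by simp only [Pi.sub_apply]; ring

def algebraicStabilityMatrix {ι R : Type*} [CommRing R] (a : ι → ι → R) (b : ι → R) :
    Matrix ι ι R :=
  of fun i j => b i * a i j + b j * a j i - b i * b j

namespace LinearMap.BilinForm

variable {R V ι : Type*} [CommRing R] [AddCommGroup V] [Module R V] [Fintype ι]

theorem IsSymm.rungeKutta_step_energy_eq {β : LinearMap.BilinForm R V} (hβ : β.IsSymm)
    (a : ι → ι → R) (b : ι → R) (k : R) (U U' : V) (Y g : ι → V)
    (hY : ∀ i, Y i = U - k • ∑ j, a i j • g j) (hU' : U' = U - k • ∑ i, b i • g i) :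
    β U' U' = β U U - 2 * k * ∑ i, b i * β (Y i) (g i)
      - k ^ 2 * ∑ i, ∑ j, algebraicStabilityMatrix a b i j * β (g i) (g j) := by
  set v := ∑ i, b i • g i with hv
  have hstep : β U' U' = β U U - 2 * k * ∑ i, b i * β U (g i)
      + k ^ 2 * ∑ i, ∑ j, b i * b j * β (g i) (g j) := by
    have hUv : β U v = ∑ i, b i * β U (g i) := by simp [hv, map_sum]
    have hvv : β v v = ∑ i, ∑ j, b i * b j * β (g i) (g j) := by
      simp only [hv, map_sum, map_smul, LinearMap.sum_apply, LinearMap.smul_apply, smul_eq_mul,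
        Finset.mul_sum]
      rw [Finset.sum_comm]
      exact Finset.sum_congr rfl fun i _ => Finset.sum_congr rfl fun j _ => by ring
    simp only [hU', map_sub, map_smul, LinearMap.sub_apply, LinearMap.smul_apply, smul_eq_mul,
      hβ.eq v U]
    rw [hUv, hvv]
    ring
  have hstage : ∑ i, b i * β (Y i) (g i)
      = ∑ i, b i * β U (g i) - k * ∑ i, ∑ j, b i * a i j * β (g i) (g j) := by
    simp [hY, map_sum, hβ.eq (g _) (g _), Finset.mul_sum, mul_sub, mul_left_comm, mul_assoc]
  have hM : ∑ i, ∑ j, algebraicStabilityMatrix a b i j * β (g i) (g j)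
      = 2 * ∑ i, ∑ j, b i * a i j * β (g i) (g j) - ∑ i, ∑ j, b i * b j * β (g i) (g j) := by
    have hswap : ∑ i, ∑ j, b j * a j i * β (g i) (g j)
        = ∑ i, ∑ j, b i * a i j * β (g i) (g j) := by
      rw [Finset.sum_comm]; simp only [hβ.eq (g _) (g _)]
    simp only [algebraicStabilityMatrix, of_apply, add_mul, sub_mul, Finset.sum_add_distrib,
      Finset.sum_sub_distrib, hswap]
    ring
  linear_combination hstep + 2 * k * hstage + k ^ 2 * hM

end LinearMap.BilinForm

theorem rk_one_step_maximal_regularity_general (n q : ℕ)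
    (A : Matrix (Fin n) (Fin n) ℝ) (hA : A.PosSemidef)
    (a : Fin q → Fin q → ℝ) (b : Fin q → ℝ)
    (hM : (Matrix.of fun i j => b i * a i j + b j * a j i - b i * b j).PosSemidef)
    (k : ℝ) (Un Unext : Fin n → ℝ) (Ust f : Fin q → (Fin n → ℝ))
    (hstage : ∀ i, Ust i = Un - k • ∑ j, a i j • (A.mulVec (Ust j) - f j))
    (hstep : Unext = Un - k • ∑ i, b i • (A.mulVec (Ust i) - f i)) :
    Unext ⬝ᵥ A.mulVec Unext
        + k * ∑ i, b i * ∑ j, (A.mulVec (Ust i) - f i) j ^ 2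
        + k * ∑ i, b i * ∑ j, (A.mulVec (Ust i) j) ^ 2
      ≤ Un ⬝ᵥ A.mulVec Un + k * ∑ i, b i * ∑ j, (f i j) ^ 2 := by
  have hA_symm : (toBilin' A).IsSymm :=
    isSymm_toBilin'_iff_isSymm.mpr (isHermitian_iff_isSymm.mp hA.isHermitian)
  have henergy := hA_symm.rungeKutta_step_energy_eq a b k Un Unext Ust _ hstage hstep
  have hdissipation : 0 ≤ ∑ i, ∑ j, algebraicStabilityMatrix a b i j
      * ((A *ᵥ Ust i - f i) ⬝ᵥ A *ᵥ (A *ᵥ Ust j - f j)) :=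
    hM.sum_mul_nonneg (hA.gram_dotProduct_mulVec fun i => A *ᵥ Ust i - f i)
  have hpolarization : 2 * ∑ i, b i * toBilin' A (Ust i) (A *ᵥ Ust i - f i)
      = ∑ i, b i * ∑ j, (A *ᵥ Ust i - f i) j ^ 2 + ∑ i, b i * ∑ j, (A *ᵥ Ust i) j ^ 2
        - ∑ i, b i * ∑ j, f i j ^ 2 := by
    rw [Finset.mul_sum, ← Finset.sum_add_distrib, ← Finset.sum_sub_distrib]
    refine Finset.sum_congr rfl fun i _ => ?_
    rw [hA_symm.eq, toBilin'_apply']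
    linear_combination b i * two_mul_sub_dotProduct (A *ᵥ Ust i) (f i)
  simp only [toBilin'_apply'] at henergy hpolarization
  linear_combination henergy - k * hpolarization + k ^ 2 * hdissipation

/-- One-step maximal regularity estimate for an algebraically stable `q`-stage
Runge–Kutta method applied to `U' + AU = f` in `ℝ^n`, with `A` symmetric positive
semidefinite. -/
theorem rk_one_step_maximal_regularity (n q : ℕ)
    (A : Matrix (Fin n) (Fin n) ℝ) (hA : A.PosSemidef)
    (a : Fin q → Fin q → ℝ) (b : Fin q → ℝ) (hb : ∀ i, 0 ≤ b i)
    (hM : (Matrix.of fun i j => b i * a i j + b j * a j i - b i * b j).PosSemidef)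
    (k : ℝ) (hk : 0 < k) (Un Unext : Fin n → ℝ) (Ust f : Fin q → (Fin n → ℝ))
    (hstage : ∀ i, Ust i = Un - k • ∑ j, a i j • (A.mulVec (Ust j) - f j))
    (hstep : Unext = Un - k • ∑ i, b i • (A.mulVec (Ust i) - f i)) :
    Unext ⬝ᵥ A.mulVec Unext
        + k * ∑ i, b i * ∑ j, (A.mulVec (Ust i) - f i) j ^ 2
        + k * ∑ i, b i * ∑ j, (A.mulVec (Ust i) j) ^ 2
      ≤ Un ⬝ᵥ A.mulVec Un + k * ∑ i, b i * ∑ j, (f i j) ^ 2 :=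
  rk_one_step_maximal_regularity_general n q A hA a b hM k Un Unext Ust f hstage hstep
end

section
/- (Radau key inequality, polynomial form) Let c_1 < ... < c_q = 1 be the right Radau nodes in (0,1], whose quadrature is exact on polynomials of degree ≤ 2q−2, and let I_{q-1} be interpolation at these nodes. Let A be a symmetric positive semidefinite n×n matrix and W : [0,1] → ℝ^n a polynomial of degree ≤ q. Then ∫_0^1 ⟨W'(τ), A(W(τ) − (I_{q-1}W)(τ))⟩ dτ ≤ 0. -/
open Polynomial Matrix

/-!
Put `E = W − I W`, which vanishes at every node. Splitting `W' = (I W)' + E'`, the polynomial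
`⟨(I W)', A E⟩` has degree `≤ 2q − 2` and vanishes at the nodes, so Radau exactness kills its
integral. As `A` is symmetric, `⟨E', A E⟩ = ½ ⟨E, A E⟩'`, so the rest integrates to
`½ (⟨E(1), A E(1)⟩ − ⟨E(0), A E(0)⟩)`: the first term vanishes because `c_q = 1`, the second is
nonnegative because `A` is positive semidefinite.
-/

section PolynomialBilinear

variable {ι R : Type*} [Fintype ι]

lemma eval_dotProduct_map_C_mulVec [CommSemiring R] (A : Matrix ι ι R) (U V : ι → R[X]) (x : R) :
    (U ⬝ᵥ A.map C *ᵥ V).eval x = (fun i => (U i).eval x) ⬝ᵥ A *ᵥ fun j => (V j).eval x := by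
  simp [dotProduct, mulVec, eval_finsetSum]

lemma natDegree_dotProduct_map_C_mulVec_le [CommSemiring R] (A : Matrix ι ι R)
    (U V : ι → R[X]) {d : ℕ} (h : ∀ i j, (U i * V j).natDegree ≤ d) :
    (U ⬝ᵥ A.map C *ᵥ V).natDegree ≤ d := by
  have hsum : U ⬝ᵥ A.map C *ᵥ V = ∑ i, ∑ j, C (A i j) * (U i * V j) := by
    simp only [dotProduct, mulVec, map_apply, Finset.mul_sum]
    exact Finset.sum_congr rfl fun i _ => Finset.sum_congr rfl fun j _ => by ring
  rw [hsum]
  refine natDegree_sum_le_of_forall_le _ _ fun i _ => natDegree_sum_le_of_forall_le _ _ fun j _ => ?_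
  exact (natDegree_C_mul_le _ _).trans (h i j)

lemma derivative_dotProduct_map_C_mulVec [CommSemiring R] (A : Matrix ι ι R) (U V : ι → R[X]) :
    derivative (U ⬝ᵥ A.map C *ᵥ V) =
      (derivative ∘ U) ⬝ᵥ A.map C *ᵥ V + U ⬝ᵥ A.map C *ᵥ (derivative ∘ V) := by
  simp only [dotProduct, mulVec, map_apply, derivative_sum, derivative_mul, derivative_C,
    zero_mul, zero_add, Finset.mul_sum, ← Finset.sum_add_distrib, Function.comp_apply]

lemma derivative_dotProduct_map_C_mulVec_self [CommSemiring R] {A : Matrix ι ι R}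
    (hA : A.IsSymm) (E : ι → R[X]) :
    derivative (E ⬝ᵥ A.map C *ᵥ E) = 2 * ((derivative ∘ E) ⬝ᵥ A.map C *ᵥ E) := by
  rw [derivative_dotProduct_map_C_mulVec, two_mul, ← dotProduct_transpose_mulVec (y := E),
    (hA.map C).eq]

end PolynomialBilinear

lemma natDegree_derivative_mul_le {R : Type*} [Semiring R] {p r : R[X]} {m : ℕ}
    (hp : p.natDegree ≤ m) (hr : r.natDegree ≤ m + 1) :
    (derivative p * r).natDegree ≤ 2 * m := by
  rcases Nat.eq_zero_or_pos m with rfl | hm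
  · simp [derivative_of_natDegree_zero (Nat.le_zero.mp hp)]
  · have := natDegree_derivative_le p
    exact natDegree_mul_le.trans (by omega)

section RealPolynomialBilinear

variable {ι : Type*} [Fintype ι]

lemma integral_eval_derivative_dotProduct_map_C_mulVec_self {A : Matrix ι ι ℝ} (hA : A.IsSymm)
    (E : ι → ℝ[X]) (a b : ℝ) :
    ∫ x in a..b, ((derivative ∘ E) ⬝ᵥ A.map C *ᵥ E).eval x =
      ((E ⬝ᵥ A.map C *ᵥ E).eval b - (E ⬝ᵥ A.map C *ᵥ E).eval a) / 2 := by
  set Q := E ⬝ᵥ A.map C *ᵥ E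
  have hFTC : ∫ x in a..b, (derivative Q).eval x = Q.eval b - Q.eval a :=
    intervalIntegral.integral_eq_sub_of_hasDerivAt (fun x _ => Q.hasDerivAt x)
      ((derivative Q).continuous.intervalIntegrable _ _)
  rw [derivative_dotProduct_map_C_mulVec_self hA] at hFTC
  simp only [eval_mul, eval_ofNat, intervalIntegral.integral_const_mul] at hFTC
  linarith

lemma eval_dotProduct_map_C_mulVec_self_nonneg {A : Matrix ι ι ℝ} (hA : A.PosSemidef)
    (E : ι → ℝ[X]) (x : ℝ) : 0 ≤ (E ⬝ᵥ A.map C *ᵥ E).eval x := by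
  simpa [eval_dotProduct_map_C_mulVec] using hA.dotProduct_mulVec_nonneg fun i => (E i).eval x

end RealPolynomialBilinear

/-- Radau key inequality, polynomial form: for the right Radau nodes
`c 0 < ... < c (q-1) = 1` in `(0,1]` whose quadrature is exact on degree `≤ 2q−2`,
a symmetric positive semidefinite matrix `A`, and a vector-valued polynomial `W` of
degree `≤ q` with interpolant `I_{q-1}W` at the nodes,
`∫₀¹ ⟨W'(τ), A (W(τ) − (I_{q-1}W)(τ))⟩ dτ ≤ 0`. -/
theorem radau_key_inequality (q n : ℕ) (hq : 0 < q) (c : Fin q → ℝ)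
    (hlast : c ⟨q - 1, by omega⟩ = 1)
    (w : Fin q → ℝ)
    (hExact : ∀ p : Polynomial ℝ, p.natDegree ≤ 2 * q - 2 →
      ∫ τ in (0 : ℝ)..1, p.eval τ = ∑ i, w i * p.eval (c i))
    (A : Matrix (Fin n) (Fin n) ℝ) (hA : A.PosSemidef)
    (W IW : Fin n → Polynomial ℝ)
    (hW : ∀ i, (W i).natDegree ≤ q) (hIW : ∀ i, (IW i).natDegree ≤ q - 1)
    (hinterp : ∀ i j, (IW i).eval (c j) = (W i).eval (c j)) :
    ∫ τ in (0 : ℝ)..1, ∑ i, (Polynomial.derivative (W i)).eval τ *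
        (A.mulVec fun j => (W j).eval τ - (IW j).eval τ) i ≤ 0 := by
  set E := W - IW
  set P := (derivative ∘ IW) ⬝ᵥ A.map C *ᵥ E
  set Q := E ⬝ᵥ A.map C *ᵥ E
  have hE_nodes (k : Fin q) : (fun j => (E j).eval (c k)) = 0 := by
    ext j; simp [E, hinterp]
  have hE_natDegree (j : Fin n) : (E j).natDegree ≤ q - 1 + 1 :=
    (natDegree_sub_le _ _).trans (max_le ((hW j).trans (by omega)) ((hIW j).trans (by omega)))
  have hintegrand (τ : ℝ) : ∑ i, (derivative (W i)).eval τ *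
      (A.mulVec fun j => (W j).eval τ - (IW j).eval τ) i =
        P.eval τ + ((derivative ∘ E) ⬝ᵥ A.map C *ᵥ E).eval τ := by
    rw [← eval_add, ← add_dotProduct, eval_dotProduct_map_C_mulVec]
    simp [E, dotProduct]
  have hP : ∫ τ in (0 : ℝ)..1, P.eval τ = 0 := by
    rw [hExact P (natDegree_dotProduct_map_C_mulVec_le _ _ _ fun i j =>
      (natDegree_derivative_mul_le (hIW i) (hE_natDegree j)).trans_eq (by omega))]
    simp [P, eval_dotProduct_map_C_mulVec, hE_nodes]
  have hQ_one : Q.eval 1 = 0 := by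
    simp [Q, eval_dotProduct_map_C_mulVec, ← hlast, hE_nodes]
  rw [intervalIntegral.integral_congr fun τ _ => hintegrand τ,
    intervalIntegral.integral_add (P.continuous.intervalIntegrable _ _)
      ((Polynomial.continuous _).intervalIntegrable _ _),
    hP, integral_eval_derivative_dotProduct_map_C_mulVec_self
      (isHermitian_iff_isSymm.mp hA.isHermitian), hQ_one]
  linarith [eval_dotProduct_map_C_mulVec_self_nonneg hA E 0]
end

section
/- (Interpolant time-derivative stability) Let 0 = τ_0 < τ_1 < ... < τ_q = 1 be fixed nodes and let ℓ̃_0, ..., ℓ̃_q be the associated Lagrange basis polynomials of degree q. There exists a constant C (depending only on q and the nodes) such that for every absolutely continuous v : [0,1] → ℝ^n with v' ∈ L²((0,1); ℝ^n), the interpolant v̂(t) = ∑_{i=0}^q ℓ̃_i(t) v(τ_i) satisfies ∫_0^1 ‖v̂'(t)‖² dt ≤ C ∫_0^1 ‖v'(t)‖² dt. -/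
open Polynomial MeasureTheory

/-! Since the Lagrange basis sums to `1`, its derivatives sum to `0`, so
`v̂'(t) = ∑ⱼ ℓⱼ'(t) (v(τⱼ) - v(0))`. Cauchy–Schwarz in `j` bounds `‖v̂'(t)‖²` by
`(∑ⱼ ℓⱼ'(t)²) ∑ⱼ ‖v(τⱼ) - v(0)‖²`. The first factor is bounded on `[0, 1]` by compactness, and each
increment `v(τⱼ) - v(0) = ∫₀^τⱼ v'` has square at most `∫₀¹ ‖v'‖²` by Cauchy–Schwarz in time. -/

theorem Lagrange.sum_derivative_basis {F ι : Type*} [Field F] [DecidableEq ι] {s : Finset ι}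
    {v : ι → F} (hvs : Set.InjOn v s) (hs : s.Nonempty) :
    ∑ j ∈ s, derivative (Lagrange.basis s v j) = 0 := by
  rw [← map_sum, Lagrange.sum_basis hvs hs, derivative_one]

theorem sum_sq_sum_mul_le_of_sum_eq_zero {ι κ : Type*} [Fintype κ] (s : Finset ι) {a : ι → ℝ}
    (ha : ∑ j ∈ s, a j = 0) (x : ι → κ → ℝ) (c : κ → ℝ) :
    ∑ k, (∑ j ∈ s, a j * x j k) ^ 2 ≤ (∑ j ∈ s, a j ^ 2) * ∑ j ∈ s, ∑ k, (x j k - c k) ^ 2 := by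
  have hshift : ∀ k, ∑ j ∈ s, a j * x j k = ∑ j ∈ s, a j * (x j k - c k) := fun k => by
    simp only [mul_sub, Finset.sum_sub_distrib, ← Finset.sum_mul, ha, zero_mul, sub_zero]
  calc ∑ k, (∑ j ∈ s, a j * x j k) ^ 2
      ≤ ∑ k, (∑ j ∈ s, a j ^ 2) * ∑ j ∈ s, (x j k - c k) ^ 2 :=
        Finset.sum_le_sum fun k _ => hshift k ▸ Finset.sum_mul_sq_le_sq_mul_sq _ _ _
    _ = (∑ j ∈ s, a j ^ 2) * ∑ j ∈ s, ∑ k, (x j k - c k) ^ 2 := by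
        rw [← Finset.mul_sum, Finset.sum_comm]

theorem sq_intervalIntegral_le_mul_intervalIntegral_sq {g : ℝ → ℝ} {a b : ℝ} (hab : a ≤ b)
    (hg : IntervalIntegrable g volume a b)
    (hg2 : IntervalIntegrable (fun x => g x ^ 2) volume a b) :
    (∫ x in a..b, g x) ^ 2 ≤ (b - a) * ∫ x in a..b, g x ^ 2 := by
  obtain rfl | hlt := hab.eq_or_lt
  · simp
  -- expand `0 ≤ ∫ ((b - a) g - ∫ g)²`
  have hvar : 0 ≤ ∫ x in a..b,
      ((b - a) ^ 2 * g x ^ 2 - 2 * (b - a) * (∫ y in a..b, g y) * g x + (∫ y in a..b, g y) ^ 2) :=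
    intervalIntegral.integral_nonneg hab fun x _ => by
      nlinarith [sq_nonneg ((b - a) * g x - ∫ y in a..b, g y)]
  rw [intervalIntegral.integral_add ((hg2.const_mul _).sub (hg.const_mul _))
    intervalIntegrable_const, intervalIntegral.integral_sub (hg2.const_mul _) (hg.const_mul _),
    intervalIntegral.integral_const_mul, intervalIntegral.integral_const_mul,
    intervalIntegral.integral_const, smul_eq_mul] at hvar
  generalize ∫ x in a..b, g x = m at hvar ⊢
  generalize ∫ x in a..b, g x ^ 2 = M at hvar ⊢
  have key : 0 ≤ (b - a) * ((b - a) * M - m ^ 2) := by linear_combination hvar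
  linarith [nonneg_of_mul_nonneg_right key (sub_pos.2 hlt)]

theorem IntervalIntegrable.sq_of_sum_sq {ι : Type*} [Fintype ι] {f : ι → ℝ → ℝ} {a b : ℝ}
    (hf : ∀ i, IntervalIntegrable (f i) volume a b)
    (hf2 : IntervalIntegrable (fun x => ∑ i, f i x ^ 2) volume a b) (i : ι) :
    IntervalIntegrable (fun x => f i x ^ 2) volume a b := by
  refine hf2.mono_fun ((hf i).aestronglyMeasurable_restrict_uIoc.pow 2)
    (Filter.Eventually.of_forall fun x => ?_)
  dsimp only
  rw [Real.norm_of_nonneg (sq_nonneg _),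
    Real.norm_of_nonneg (Finset.sum_nonneg fun i _ => sq_nonneg (f i x))]
  exact Finset.single_le_sum (f := fun i => f i x ^ 2) (fun i _ => sq_nonneg _) (Finset.mem_univ i)

theorem sum_sq_intervalIntegral_le {ι : Type*} [Fintype ι] {f : ι → ℝ → ℝ} {a t b : ℝ}
    (ht : t ∈ Set.Icc a b) (hf : ∀ i, IntervalIntegrable (f i) volume a b)
    (hf2 : IntervalIntegrable (fun x => ∑ i, f i x ^ 2) volume a b) :
    ∑ i, (∫ x in a..t, f i x) ^ 2 ≤ (b - a) * ∫ x in a..b, ∑ i, f i x ^ 2 := by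
  obtain ⟨hat, htb⟩ := ht
  have hsq := IntervalIntegrable.sq_of_sum_sq hf hf2
  have hsub : Set.uIcc a t ⊆ Set.uIcc a b :=
    Set.uIcc_subset_uIcc_left (Set.Icc_subset_uIcc ⟨hat, htb⟩)
  calc ∑ i, (∫ x in a..t, f i x) ^ 2 ≤ ∑ i, (t - a) * ∫ x in a..t, f i x ^ 2 :=
        Finset.sum_le_sum fun i _ => sq_intervalIntegral_le_mul_intervalIntegral_sq hat
          ((hf i).mono_set hsub) ((hsq i).mono_set hsub)
    _ ≤ ∑ i, (b - a) * ∫ x in a..b, f i x ^ 2 := by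
        gcongr with i
        · exact intervalIntegral.integral_nonneg hat fun x _ => sq_nonneg _
        · linarith
        · exact intervalIntegral.integral_mono_interval le_rfl hat htb
            (Filter.Eventually.of_forall fun x => sq_nonneg _) (hsq i)
    _ = (b - a) * ∫ x in a..b, ∑ i, f i x ^ 2 := by
        rw [← Finset.mul_sum, intervalIntegral.integral_finsetSum fun i _ => hsq i]

/-- Interpolant time-derivative stability: for fixed nodes `0 = τ 0 < ... < τ q = 1`
there is a constant `C` (depending only on `q` and the nodes) such that for every
absolutely continuous `v : [0,1] → ℝ^n` with `v' ∈ L²`, the interpolant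
`v̂(t) = ∑ i, ℓ̃ i (t) • v (τ i)` satisfies `∫₀¹ ‖v̂'‖² ≤ C ∫₀¹ ‖v'‖²`. -/
theorem interpolant_derivative_stability (q : ℕ) (τ : Fin (q + 1) → ℝ)
    (hτ : StrictMono τ) (h0 : τ 0 = 0) (h1 : τ (Fin.last q) = 1) :
    ∃ C : ℝ, ∀ (n : ℕ) (v v' : ℝ → (Fin n → ℝ)),
      (∀ t ∈ Set.Icc (0 : ℝ) 1, ∀ i,
        v t i = v 0 i + ∫ s in (0 : ℝ)..t, v' s i) →
      (∀ i, IntervalIntegrable (fun s => v' s i) volume 0 1) →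
      IntervalIntegrable (fun s => ∑ i, (v' s i) ^ 2) volume 0 1 →
      (∫ t in (0 : ℝ)..1, ∑ i,
          (∑ j, (Polynomial.derivative (Lagrange.basis Finset.univ τ j)).eval t
            * v (τ j) i) ^ 2)
        ≤ C * ∫ t in (0 : ℝ)..1, ∑ i, (v' t i) ^ 2 := by
  obtain ⟨M, hM⟩ := (isCompact_Icc (a := (0 : ℝ)) (b := 1)).bddAbove_image (f := fun t =>
      ∑ j, ((derivative (Lagrange.basis Finset.univ τ j)).eval t) ^ 2) (by fun_prop)
  have hM0 : 0 ≤ M := (Finset.sum_nonneg fun j _ => sq_nonneg _).trans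
    (hM ⟨0, Set.left_mem_Icc.2 zero_le_one, rfl⟩)
  refine ⟨(q + 1) * M, fun n v v' hv hv' hv'2 => ?_⟩
  set I := ∫ t in (0 : ℝ)..1, ∑ i, (v' t i) ^ 2
  have hτ_mem : ∀ j, τ j ∈ Set.Icc (0 : ℝ) 1 := fun j =>
    ⟨h0 ▸ hτ.monotone (Fin.zero_le j), h1 ▸ hτ.monotone (Fin.le_last j)⟩
  have hincr : ∀ j, ∑ i, (v (τ j) i - v 0 i) ^ 2 ≤ I := fun j => by
    simpa [hv (τ j) (hτ_mem j)] using sum_sq_intervalIntegral_le (hτ_mem j) hv' hv'2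
  have hpt : ∀ t ∈ Set.Icc (0 : ℝ) 1, ∑ i,
      (∑ j, (derivative (Lagrange.basis Finset.univ τ j)).eval t * v (τ j) i) ^ 2
        ≤ (q + 1) * M * I := fun t ht => calc
    _ ≤ (∑ j, ((derivative (Lagrange.basis Finset.univ τ j)).eval t) ^ 2) *
          ∑ j, ∑ i, (v (τ j) i - v 0 i) ^ 2 := by
        refine sum_sq_sum_mul_le_of_sum_eq_zero _ ?_ _ _
        rw [← eval_finsetSum, Lagrange.sum_derivative_basis hτ.injective.injOn
          Finset.univ_nonempty, eval_zero]
    _ ≤ M * ∑ _j : Fin (q + 1), I :=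
        mul_le_mul (hM ⟨t, ht, rfl⟩) (Finset.sum_le_sum fun j _ => hincr j)
          (Finset.sum_nonneg fun j _ => Finset.sum_nonneg fun i _ => sq_nonneg _) hM0
    _ = (q + 1) * M * I := by
        rw [Finset.sum_const, Finset.card_univ, Fintype.card_fin, nsmul_eq_mul]
        push_cast
        ring
  refine (intervalIntegral.integral_mono_on zero_le_one ?_ intervalIntegrable_const hpt).trans_eq
    (by simp)
  exact Continuous.intervalIntegrable (by fun_prop) _ _
end
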